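/- Let M ∈ ℝ^{D×D} be a symmetric positive semidefinite matrix, let x ∈ ℝ^D, let x_j ∈ ℝ^D, and let {x_i}_{i ∈ I} be a finite family of points in ℝ^D such that M(x_i − x_j) ≠ 0 for every i ∈ I. If δ ∈ ℝ^D satisfies d_M(x + δ, x_j) ≤ d_M(x + δ, x_i) for all i ∈ I, then ‖δ‖₂ ≥ max over i ∈ I of [ε̃(x_i, x_j, x; M)]₊, where ε̃(x⁺, x⁻, x; M) = (d_M(x, x⁻) − d_M(x, x⁺)) / (2 ‖M(x⁺ − x⁻)‖₂). -/

import Mathlib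

open Matrix

/-- Mahalanobis (squared) distance `d_M(x, x') = (x - x')ᵀ M (x - x')`. -/
noncomputable def mah {D : ℕ} (M : Matrix (Fin D) (Fin D) ℝ) (x x' : Fin D → ℝ) : ℝ :=
  (x - x') ⬝ᵥ M.mulVec (x - x')

/-- Euclidean norm `‖v‖₂` on `Fin D → ℝ`. -/
noncomputable def eucNorm {D : ℕ} (v : Fin D → ℝ) : ℝ :=
  Real.sqrt (v ⬝ᵥ v)


/-- `ε̃(x⁺, x⁻, x; M) = (d_M(x, x⁻) − d_M(x, x⁺)) / (2‖M(x⁺ − x⁻)‖₂)`. -/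
noncomputable def epsTilde {D : ℕ} (M : Matrix (Fin D) (Fin D) ℝ) (xp xm x : Fin D → ℝ) : ℝ :=
  (mah M x xm - mah M x xp) / (2 * eucNorm (M.mulVec (xp - xm)))


/-!
For symmetric `M`, the gap `d_M(x + δ, x⁻) - d_M(x + δ, x⁺)` equals its value at `δ = 0` plus the
linear term `2 ⟪δ, M (x⁺ - x⁻)⟫`. Closing the gap therefore needs
`2 ‖δ‖ ‖M (x⁺ - x⁻)‖ ≥ d_M(x, x⁻) - d_M(x, x⁺)` by Cauchy–Schwarz, i.e. `‖δ‖ ≥ ε̃`, one competitor at a time.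
-/

lemma eucNorm_eq_norm_toLp {D : ℕ} (v : Fin D → ℝ) :
    eucNorm v = ‖(WithLp.toLp 2 v : EuclideanSpace ℝ (Fin D))‖ := by
  rw [norm_eq_sqrt_real_inner, EuclideanSpace.inner_toLp_toLp, star_trivial]
  rfl

lemma abs_dotProduct_le_eucNorm_mul {D : ℕ} (u v : Fin D → ℝ) :
    |u ⬝ᵥ v| ≤ eucNorm u * eucNorm v := by
  simpa only [eucNorm_eq_norm_toLp, EuclideanSpace.inner_toLp_toLp, star_trivial,
    dotProduct_comm v] using
    abs_real_inner_le_norm (WithLp.toLp 2 u : EuclideanSpace ℝ (Fin D)) (WithLp.toLp 2 v)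

lemma Matrix.IsSymm.dotProduct_mulVec_comm {n R : Type*} [Fintype n] [CommSemiring R]
    {M : Matrix n n R} (hM : M.IsSymm) (u v : n → R) : u ⬝ᵥ M *ᵥ v = v ⬝ᵥ M *ᵥ u := by
  rw [dotProduct_mulVec, ← mulVec_transpose, hM.eq, dotProduct_comm]

lemma mah_add_sub_mah_add {D : ℕ} {M : Matrix (Fin D) (Fin D) ℝ} (hM : M.IsSymm)
    (x δ a b : Fin D → ℝ) :
    mah M (x + δ) a - mah M (x + δ) b = mah M x a - mah M x b + 2 * (δ ⬝ᵥ M *ᵥ (b - a)) := by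
  simp only [mah, add_sub_right_comm x δ, mulVec_add, mulVec_sub, dotProduct_add, add_dotProduct,
    dotProduct_sub, sub_dotProduct, hM.dotProduct_mulVec_comm _ δ]
  ring

theorem epsTilde_le_eucNorm_of_mah_le {D : ℕ} {M : Matrix (Fin D) (Fin D) ℝ} (hM : M.IsSymm)
    {xp xm x δ : Fin D → ℝ} (h : mah M (x + δ) xm ≤ mah M (x + δ) xp) :
    epsTilde M xp xm x ≤ eucNorm δ := by
  have hshift := mah_add_sub_mah_add hM x δ xm xp
  have hcs := abs_dotProduct_le_eucNorm_mul δ (M *ᵥ (xp - xm))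
  -- `div_le_of_le_mul₀` also covers `M *ᵥ (xp - xm) = 0`, where the quotient is the junk value `0`.
  refine div_le_of_le_mul₀ (mul_nonneg zero_le_two (Real.sqrt_nonneg _)) (Real.sqrt_nonneg _) ?_
  linarith [neg_abs_le (δ ⬝ᵥ M *ᵥ (xp - xm))]

theorem perturbation_lower_bound_max_general {D : ℕ} {ι : Type*}
    (M : Matrix (Fin D) (Fin D) ℝ) (hM : M.PosSemidef)
    (x xj : Fin D → ℝ) (I : Finset ι) (hI : I.Nonempty) (xi : ι → Fin D → ℝ)
    (δ : Fin D → ℝ)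
    (hδ : ∀ i ∈ I, mah M (x + δ) xj ≤ mah M (x + δ) (xi i)) :
    I.sup' hI (fun i => max (epsTilde M (xi i) xj x) 0) ≤ eucNorm δ :=
  Finset.sup'_le hI _ fun i hi =>
    max_le (epsTilde_le_eucNorm_of_mah_le (isHermitian_iff_isSymm.mp hM.1) (hδ i hi))
      (Real.sqrt_nonneg _)

/-- if `δ` satisfies `d_M(x + δ, x_j) ≤ d_M(x + δ, x_i)` for all `i ∈ I`, then
`‖δ‖₂ ≥ max_{i ∈ I} [ε̃(x_i, x_j, x; M)]₊`. -/
theorem perturbation_lower_bound_max {D : ℕ} {ι : Type*}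
    (M : Matrix (Fin D) (Fin D) ℝ) (hM : M.PosSemidef)
    (x xj : Fin D → ℝ) (I : Finset ι) (hI : I.Nonempty) (xi : ι → Fin D → ℝ)
    (hMx : ∀ i ∈ I, M.mulVec (xi i - xj) ≠ 0)
    (δ : Fin D → ℝ)
    (hδ : ∀ i ∈ I, mah M (x + δ) xj ≤ mah M (x + δ) (xi i)) :
    I.sup' hI (fun i => max (epsTilde M (xi i) xj x) 0) ≤ eucNorm δ :=
  perturbation_lower_bound_max_general M hM x xj I hI xi δ hδ
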